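/- arXiv:1704.03842 — 8 statements merged into one kernel-verified Lean document; each statement's English description precedes it below -/
import Mathlib

section
/- Let y = ⊕_{I ∈ S} a_I ⊗ x^{⊗I} and y' = ⊕_{I ∈ S'} b_I ⊗ x^{⊗I} be two resolutions of f = ⊕_{i=0}^d f_i ⊗ y^{⊗i}. Then the tropical Newton–Puiseux polynomial with support S ∪ S' whose coefficient at I is min(a_I, b_I) (taken to be a_I if I ∈ S \ S' and b_I if I ∈ S' \ S) is again a resolution of f; equivalently, the pointwise minimum x ↦ min(y(x), y'(x)) is a resolution of f. -/
open Finset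

/-- A tropical polynomial in `n` variables: a finite nonempty family of monomials
`(c, J)` with real coefficient `c` and exponent `J ∈ ℕ^n`.  It defines the convex
piecewise-linear function `x ↦ min_J (c_J + ⟨J, x⟩)`. -/
structure TropPoly (n : ℕ) where
  monos : Finset (ℝ × (Fin n → ℕ))
  ne : monos.Nonempty

/-- The convex piecewise-linear function defined by a tropical polynomial. -/
noncomputable def TropPoly.eval {n : ℕ} (f : TropPoly n) (x : Fin n → ℝ) : ℝ :=
  f.monos.inf' f.ne fun p => p.1 + ∑ j, (p.2 j : ℝ) * x j

/-- A tropical Newton–Puiseux polynomial in `n` variables: a finite nonempty family of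
monomials `(a, I)` with rational coefficient `a` and exponent `I ∈ ℚ^n`. -/
structure NPPoly (n : ℕ) where
  monos : Finset (ℚ × (Fin n → ℚ))
  ne : monos.Nonempty

/-- The convex piecewise-linear function defined by a tropical Newton–Puiseux polynomial. -/
noncomputable def NPPoly.eval {n : ℕ} (y : NPPoly n) (x : Fin n → ℝ) : ℝ :=
  y.monos.inf' y.ne fun p => (p.1 : ℝ) + ∑ j, (p.2 j : ℝ) * x j

/-- The value of the term `f_i ⊗ y^{⊗ i}` of `f = ⊕_{i=0}^d f_i ⊗ y^{⊗ i}` at the point `x`,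
when the indeterminate `y` has the value `y0`. -/
noncomputable def termVal {n d : ℕ} (f : Fin (d+1) → TropPoly n) (x : Fin n → ℝ) (y0 : ℝ)
    (i : Fin (d+1)) : ℝ :=
  (f i).eval x + (i : ℕ) * y0

/-- At the point `x`, with value `y0` substituted for the indeterminate, the minimum of the
`d+1` values `f_i(x) + i·y0` is attained for at least two distinct indices `i`. -/
def TiesAt {n d : ℕ} (f : Fin (d+1) → TropPoly n) (x : Fin n → ℝ) (y0 : ℝ) : Prop :=
  ∃ i₁ i₂ : Fin (d+1), i₁ ≠ i₂ ∧ termVal f x y0 i₁ = termVal f x y0 i₂ ∧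
    ∀ i, termVal f x y0 i₁ ≤ termVal f x y0 i

/-- A function `y : ℝ^n → ℝ` is a resolution of `f = ⊕_{i=0}^d f_i ⊗ y^{⊗ i}` if at every
point `x` the minimum of the `d+1` values `f_i(x) + i·y(x)` is attained for at least two
distinct indices. -/
def IsResolution {n d : ℕ} (f : Fin (d+1) → TropPoly n) (y : (Fin n → ℝ) → ℝ) : Prop :=
  ∀ x, TiesAt f x (y x)

/-- The tropical Newton-Puiseux polynomial whose support is the union of the supports of
`y` and `y'`; as a function it is the pointwise minimum of `y` and `y'` (in particular its
coefficient at a common exponent `I` is the minimum of the two coefficients). -/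
def NPPoly.union {n : ℕ} (y y' : NPPoly n) : NPPoly n :=
  ⟨y.monos ∪ y'.monos, y.ne.mono Finset.subset_union_left⟩

/-- If `y` and `y'` are resolutions of `f`, then the tropical Newton-Puiseux polynomial
with support the union of the supports, whose coefficients are the minima of the
coefficients, is again a resolution of `f`; equivalently, the pointwise minimum
`x ↦ min (y x) (y' x)` is a resolution of `f`. -/
theorem min_of_resolutions_isResolution {n d : ℕ} (f : Fin (d+1) → TropPoly n)
    (y y' : NPPoly n) (h : IsResolution f y.eval) (h' : IsResolution f y'.eval) :
    IsResolution f (y.union y').eval ∧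
      (∀ x, (y.union y').eval x = min (y.eval x) (y'.eval x)) ∧
      IsResolution f (fun x => min (y.eval x) (y'.eval x)) := by
  have key : ∀ x, (y.union y').eval x = min (y.eval x) (y'.eval x) := by
    intro x
    simp only [NPPoly.union, NPPoly.eval]
    exact Finset.inf'_union y.ne y'.ne _
  have res : IsResolution f (fun x => min (y.eval x) (y'.eval x)) := by
    intro x
    rcases min_cases (y.eval x) (y'.eval x) with ⟨hm, _⟩ | ⟨hm, _⟩
    · simpa [hm] using h x
    · simpa [hm] using h' x
  exact ⟨fun x => key x ▸ res x, key, res⟩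
end

section
/- Let f_0, …, f_d be tropical polynomials in n variables with integer coefficients and f = ⊕_{i=0}^d f_i ⊗ y^{⊗i}. Then the set of resolutions of f, regarded as functions ℝ^n → ℝ, is finite. -/
open Finset

/-- A tropical polynomial has integer coefficients. -/
def HasIntCoeffs {n : ℕ} (f : TropPoly n) : Prop :=
  ∀ p ∈ f.monos, ∃ z : ℤ, p.1 = (z : ℝ)

/-! Every value `y(x)` of a resolution is forced by a tie `f_i(x) + i·y = f_j(x) + j·y`, so it is
the value at `x` of one of finitely many affine candidate functions. A Newton–Puiseux polynomial
`y` is the minimum of its affine monomials `ℓ`; away from the finitely many hyperplanes on which a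
monomial meets a different candidate, the minimizing monomial must itself be a candidate. By
continuity `y` is therefore the minimum of those of its monomials that are candidates, and there
are only finitely many such minima. -/

theorem AffineMap.ext_on_isOpen {V P Q W : Type*} [NormedAddCommGroup V] [NormedSpace ℝ V]
    [MetricSpace P] [NormedAddTorsor V P] [AddCommGroup W] [Module ℝ W] [AddTorsor W Q]
    {f g : P →ᵃ[ℝ] Q} {s : Set P} (hs : IsOpen s) (hne : s.Nonempty) (h : s.EqOn f g) :
    f = g :=
  AffineMap.ext_on (hs.affineSpan_eq_top hne) h

theorem AffineMap.dense_setOf_ne {V P Q W : Type*} [NormedAddCommGroup V] [NormedSpace ℝ V]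
    [MetricSpace P] [NormedAddTorsor V P] [AddCommGroup W] [Module ℝ W] [AddTorsor W Q]
    {f g : P →ᵃ[ℝ] Q} (hfg : f ≠ g) : Dense {x | f x ≠ g x} := by
  rw [← Set.compl_ofPred, ← interior_eq_empty_iff_dense_compl, ← Set.not_nonempty_iff_eq_empty]
  exact fun hne => hfg <| ext_on_isOpen isOpen_interior hne fun _ hx =>
    (interior_subset hx : _ ∈ {x | f x = g x})

theorem AffineMap.exists_inf'_inter_eq {E : Type*} [NormedAddCommGroup E] [NormedSpace ℝ E]
    [FiniteDimensional ℝ E] [DecidableEq (E →ᵃ[ℝ] ℝ)] {L A : Finset (E →ᵃ[ℝ] ℝ)}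
    (hL : L.Nonempty) (hA : ∀ x, ∃ a ∈ A, L.inf' hL (· x) = a x) :
    ∃ hLA : (L ∩ A).Nonempty, ∀ x, L.inf' hL (· x) = (L ∩ A).inf' hLA (· x) := by
  have hcont (φ : E →ᵃ[ℝ] ℝ) : Continuous φ := φ.continuous_of_finiteDimensional
  set D : Set E := ⋂₀ ((fun p => {x | p.1 x ≠ p.2 x}) ''
    ((L ×ˢ A).filter fun p => p.1 ≠ p.2 : Set ((E →ᵃ[ℝ] ℝ) × (E →ᵃ[ℝ] ℝ))))
  have hD : Dense D := by
    refine Set.Finite.dense_sInter ((Finset.finite_toSet _).image _) ?_ ?_ <;>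
      rintro _ ⟨p, hp, rfl⟩
    · exact isOpen_ne_fun (hcont p.1) (hcont p.2)
    · exact dense_setOf_ne (Finset.mem_filter.1 hp).2
  -- Off the hyperplanes `ℓ = a` with `ℓ ≠ a`, a minimizing `ℓ ∈ L` must itself belong to `A`.
  have hmin : ∀ x ∈ D, ∃ ℓ ∈ L ∩ A, L.inf' hL (· x) = ℓ x := by
    intro x hx
    obtain ⟨ℓ, hℓ, hℓx⟩ := L.exists_mem_eq_inf' hL (· x)
    obtain ⟨a, ha, hax⟩ := hA x
    obtain rfl : ℓ = a := by
      by_contra hne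
      exact Set.mem_sInter.1 hx _ ⟨(ℓ, a), by simp [hℓ, ha, hne], rfl⟩ (hℓx ▸ hax)
    exact ⟨ℓ, Finset.mem_inter.2 ⟨hℓ, ha⟩, hℓx⟩
  obtain ⟨x₀, hx₀⟩ := hD.nonempty
  obtain ⟨ℓ₀, hℓ₀, -⟩ := hmin x₀ hx₀
  refine ⟨⟨ℓ₀, hℓ₀⟩, fun x => congrFun (Continuous.ext_on hD
    (Continuous.finset_inf'_apply hL fun φ _ => hcont φ)
    (Continuous.finset_inf'_apply _ fun φ _ => hcont φ) fun x hx => ?_) x⟩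
  obtain ⟨ℓ, hℓ, hℓx⟩ := hmin x hx
  exact le_antisymm (Finset.inf'_mono _ Finset.inter_subset_left _)
    (hℓx ▸ Finset.inf'_le _ hℓ)

noncomputable def monomialAffineMap {ι : Type*} [Fintype ι] (c : ℝ) (J : ι → ℝ) :
    (ι → ℝ) →ᵃ[ℝ] ℝ :=
  AffineMap.const ℝ (ι → ℝ) c + (∑ j, J j • LinearMap.proj j : (ι → ℝ) →ₗ[ℝ] ℝ).toAffineMap

@[simp]
theorem monomialAffineMap_apply {ι : Type*} [Fintype ι] (c : ℝ) (J x : ι → ℝ) :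
    monomialAffineMap c J x = c + ∑ j, J j * x j := by
  simp [monomialAffineMap]

noncomputable def TropPoly.monomial {n : ℕ} (p : ℝ × (Fin n → ℕ)) : (Fin n → ℝ) →ᵃ[ℝ] ℝ :=
  monomialAffineMap p.1 fun j => (p.2 j : ℝ)

theorem TropPoly.eval_eq_inf' {n : ℕ} (f : TropPoly n) (x : Fin n → ℝ) :
    f.eval x = f.monos.inf' f.ne fun p => TropPoly.monomial p x := by
  simp [TropPoly.eval, TropPoly.monomial]

open Classical in
noncomputable def NPPoly.monomials {n : ℕ} (y : NPPoly n) : Finset ((Fin n → ℝ) →ᵃ[ℝ] ℝ) :=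
  y.monos.image fun p => monomialAffineMap p.1 fun j => (p.2 j : ℝ)

open Classical in
theorem NPPoly.monomials_nonempty {n : ℕ} (y : NPPoly n) : y.monomials.Nonempty :=
  y.ne.image _

theorem NPPoly.eval_eq_inf' {n : ℕ} (y : NPPoly n) (x : Fin n → ℝ) :
    y.eval x = y.monomials.inf' y.monomials_nonempty (· x) := by
  classical
  simp [NPPoly.eval, NPPoly.monomials, Finset.inf'_image]

open Classical in
/-- If `f_i(x) + i y = f_j(x) + j y` with `i ≠ j` and the minima `f_i(x)`, `f_j(x)` are attained
at the monomials `p`, `q`, then `y = (p(x) - q(x)) / (j - i)`. -/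
noncomputable def resolutionCandidates {n d : ℕ} (f : Fin (d+1) → TropPoly n) :
    Finset ((Fin n → ℝ) →ᵃ[ℝ] ℝ) :=
  Finset.univ.offDiag.biUnion fun ij => ((f ij.1).monos ×ˢ (f ij.2).monos).image fun pq =>
    (((ij.2 : ℕ) : ℝ) - (ij.1 : ℕ))⁻¹ • (TropPoly.monomial pq.1 - TropPoly.monomial pq.2)

theorem TiesAt.exists_mem_resolutionCandidates {n d : ℕ} {f : Fin (d+1) → TropPoly n}
    {x : Fin n → ℝ} {y₀ : ℝ} (h : TiesAt f x y₀) :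
    ∃ a ∈ resolutionCandidates f, y₀ = a x := by
  classical
  obtain ⟨i, j, hij, hterm, -⟩ := h
  obtain ⟨p, hp, hpx⟩ := (f i).monos.exists_mem_eq_inf' (f i).ne fun p => TropPoly.monomial p x
  obtain ⟨q, hq, hqx⟩ := (f j).monos.exists_mem_eq_inf' (f j).ne fun p => TropPoly.monomial p x
  have hji : ((j : ℕ) : ℝ) - (i : ℕ) ≠ 0 :=
    sub_ne_zero.2 fun h => hij (Fin.ext (by exact_mod_cast h.symm))
  refine ⟨_, Finset.mem_biUnion.2 ⟨(i, j), by simpa using hij,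
    Finset.mem_image.2 ⟨(p, q), Finset.mem_product.2 ⟨hp, hq⟩, rfl⟩⟩, ?_⟩
  simp only [termVal, TropPoly.eval_eq_inf', hpx, hqx] at hterm
  simp only [AffineMap.coe_smul, AffineMap.coe_sub, Pi.smul_apply, Pi.sub_apply, smul_eq_mul]
  field_simp
  linarith

theorem finite_resolutions_general {n d : ℕ} (f : Fin (d+1) → TropPoly n) :
    {g : (Fin n → ℝ) → ℝ | ∃ y : NPPoly n, IsResolution f y.eval ∧ g = y.eval}.Finite := by
  classical
  set A := resolutionCandidates f
  have hsubsets : {S | S ⊆ A ∧ S.Nonempty}.Finite :=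
    A.powerset.finite_toSet.subset fun S hS => Finset.mem_powerset.2 hS.1
  refine (hsubsets.dependent_image fun S hS x => S.inf' hS.2 (· x)).subset ?_
  rintro _ ⟨y, hy, rfl⟩
  obtain ⟨hne, heq⟩ := AffineMap.exists_inf'_inter_eq y.monomials_nonempty fun x => by
    simpa only [← y.eval_eq_inf', eq_comm] using (hy x).exists_mem_resolutionCandidates
  exact ⟨_, ⟨Finset.inter_subset_right, hne⟩, funext fun x => by rw [y.eval_eq_inf', heq]⟩

/-- If `f_0, ..., f_d` are tropical polynomials with integer coefficients, then the set of
resolutions of `f`, regarded as functions from `R^n` to `R`, is finite. -/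
theorem finite_resolutions {n d : ℕ} (f : Fin (d+1) → TropPoly n)
    (hint : ∀ i, HasIntCoeffs (f i)) :
    {g : (Fin n → ℝ) → ℝ | ∃ y : NPPoly n, IsResolution f y.eval ∧ g = y.eval}.Finite :=
  finite_resolutions_general f
end

section
/- Let f_0, …, f_d be tropical polynomials in n variables with integer coefficients and f = ⊕_{i=0}^d f_i ⊗ y^{⊗i}. If f admits at least one resolution, then f admits a minimal resolution: a resolution y* such that every resolution y of f satisfies y*(x) ≤ y(x) for all x ∈ ℝ^n. -/
open Finset

/-!
If the minimum of `f_i(x) + i t` is attained twice, at `i ≠ j` by monomials `c + ⟨J, x⟩` and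
`c' + ⟨J', x⟩`, then `t = (c - c' + ⟨J - J', x⟩) / (j - i)`. So at every point the resolutions
take values among finitely many rational affine functions, and the pointwise minimum `z` of all
resolutions is attained; it is therefore a resolution, and it is concave as an infimum of concave
functions. A concave function that agrees at each point with one of finitely many affine
functions is the minimum of those among them that dominate it: otherwise, by Baire, a
non-dominating one agrees with `z` on an open set, and concavity makes it dominate `z`
everywhere. Hence `z` is a Newton–Puiseux polynomial.
-/

open Set Filter Topology

section PointwiseInf

variable {E : Type*} {S : Set (E → ℝ)}

lemma sInf_apply_le_of_finite (hfin : ∀ x, ((fun g => g x) '' S).Finite) {g : E → ℝ}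
    (hg : g ∈ S) (x : E) : sInf S x ≤ g x := by
  have hbdd := (hfin x).bddBelow
  rw [image_eq_range] at hbdd
  rw [sInf_apply]
  exact ciInf_le hbdd ⟨g, hg⟩

lemma exists_mem_apply_eq_sInf_apply (hS : S.Nonempty)
    (hfin : ∀ x, ((fun g => g x) '' S).Finite) (x : E) : ∃ g ∈ S, g x = sInf S x := by
  have hmem := (hS.image (fun g => g x)).csInf_mem (hfin x)
  rw [image_eq_range] at hmem
  obtain ⟨⟨g, hg⟩, hgx⟩ := hmem
  exact ⟨g, hg, hgx.trans (sInf_apply ..).symm⟩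

lemma concaveOn_sInf [AddCommGroup E] [Module ℝ E] {s : Set E} (hS : S.Nonempty)
    (hfin : ∀ x, ((fun g => g x) '' S).Finite) (hconc : ∀ g ∈ S, ConcaveOn ℝ s g) :
    ConcaveOn ℝ s (sInf S) := by
  refine ⟨hS.elim fun g hg => (hconc g hg).1, fun x₁ hx₁ x₂ hx₂ a b ha hb hab => ?_⟩
  obtain ⟨g, hg, hgx⟩ := exists_mem_apply_eq_sInf_apply hS hfin (a • x₁ + b • x₂)
  calc a • sInf S x₁ + b • sInf S x₂ ≤ a • g x₁ + b • g x₂ := by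
        gcongr <;> exact sInf_apply_le_of_finite hfin hg _
    _ ≤ g (a • x₁ + b • x₂) := (hconc g hg).2 hx₁ hx₂ ha hb hab
    _ = sInf S (a • x₁ + b • x₂) := hgx

end PointwiseInf

theorem exists_nonempty_interior_of_subset_biUnion {X ι : Type*} [TopologicalSpace X]
    [BaireSpace X] {U : Set X} (hU : IsOpen U) (hne : U.Nonempty) {s : Set ι} (hs : s.Countable)
    {F : ι → Set X} (hF : ∀ i ∈ s, IsClosed (F i)) (hcov : U ⊆ ⋃ i ∈ s, F i) :
    ∃ i ∈ s, (interior (F i)).Nonempty := by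
  have : BaireSpace U := hU.baireSpace
  have : Nonempty U := hne.to_subtype
  have : Countable s := hs.to_subtype
  have hcovU : ⋃ i : s, ((↑) : U → X) ⁻¹' F i = univ := by
    refine eq_univ_of_forall fun u => ?_
    obtain ⟨i, hi, hu⟩ := mem_iUnion₂.1 (hcov u.2)
    exact mem_iUnion.2 ⟨⟨i, hi⟩, hu⟩
  obtain ⟨⟨i, hi⟩, u, hu⟩ := nonempty_interior_of_iUnion_of_closed
    (fun i : s => (hF i i.2).preimage continuous_subtype_val) hcovU
  refine ⟨i, hi, u, interior_maximal ?_ ?_ (mem_image_of_mem _ hu)⟩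
  · exact (Set.image_mono interior_subset).trans (image_preimage_subset _ _)
  · exact hU.isOpenMap_subtype_val _ isOpen_interior

section ConcavePieces

variable {E : Type*} [NormedAddCommGroup E] [NormedSpace ℝ E]

theorem ConcaveOn.isMaxOn_of_isLocalMin {h : E → ℝ} {v : E} (hh : ConcaveOn ℝ univ h)
    (hv : IsLocalMin h v) : IsMaxOn h univ v := by
  rw [isMaxOn_univ_iff]
  intro x
  have hline : Tendsto (fun t : ℝ => v + t • (v - x)) (𝓝 0) (𝓝 v) := by
    have : Continuous fun t : ℝ => v + t • (v - x) := by fun_prop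
    simpa using this.tendsto 0
  -- `v` is a convex combination of `x` and a point `p` beyond `v`, close enough that `h v ≤ h p`.
  obtain ⟨t, ht, hvp⟩ := (hline.eventually hv).exists_gt
  set p := v + t • (v - x)
  have hv_comb : (1 / (1 + t)) • p + (t / (1 + t)) • x = v := by
    simp only [p]
    match_scalars <;> field_simp; ring
  have hconc := hh.2 (mem_univ p) (mem_univ x) (show (0 : ℝ) ≤ 1 / (1 + t) by positivity)
    (show (0 : ℝ) ≤ t / (1 + t) by positivity) (by field_simp)
  rw [hv_comb, smul_eq_mul, smul_eq_mul] at hconc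
  have hcleared : (1 + t) * ((1 / (1 + t)) * h p + (t / (1 + t)) * h x) = h p + t * h x := by
    field_simp
  nlinarith

theorem ConcaveOn.le_of_eventuallyEq {z g : E → ℝ} {v : E} (hz : ConcaveOn ℝ univ z)
    (hg : ConvexOn ℝ univ g) (hzg : z =ᶠ[𝓝 v] g) : z ≤ g := by
  have hmin : IsLocalMin (z - g) v :=
    hzg.mono fun x hx => by simp [hx, hzg.eq_of_nhds]
  intro x
  have := isMaxOn_univ_iff.1 ((hz.sub hg).isMaxOn_of_isLocalMin hmin) x
  simpa [hzg.eq_of_nhds] using this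


theorem ConcaveOn.exists_dominating_piece [FiniteDimensional ℝ E] {ι : Type*} {z : E → ℝ}
    {s : Finset ι} {g : ι → E → ℝ} (hz : ConcaveOn ℝ univ z) (hgc : ∀ i ∈ s, Continuous (g i))
    (hgv : ∀ i ∈ s, ConvexOn ℝ univ (g i)) (hpiece : ∀ x, ∃ i ∈ s, g i x = z x) (x₀ : E) :
    ∃ i ∈ s, z ≤ g i ∧ g i x₀ = z x₀ := by
  classical
  have hzc : Continuous z := continuousOn_univ.1 (hz.continuousOn isOpen_univ)
  set D := s.filter fun i => z ≤ g i
  by_contra! hcon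
  set U := ⋂ i ∈ D, {x | z x < g i x}
  have hU : IsOpen U := isOpen_biInter_finset fun i hi =>
    isOpen_lt hzc (hgc i (Finset.mem_filter.1 hi).1)
  have hx₀ : x₀ ∈ U := mem_iInter₂.2 fun i hi => by
    obtain ⟨his, hle⟩ := Finset.mem_filter.1 hi
    exact (hle x₀).lt_of_ne (hcon i his hle).symm
  have hcov : U ⊆ ⋃ i ∈ (↑(s \ D) : Set ι), {x | g i x = z x} := by
    intro x hx
    obtain ⟨i, hi, hzx⟩ := hpiece x
    have hiD : i ∉ D := fun hiD => (mem_iInter₂.1 hx i hiD).ne' hzx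
    exact mem_iUnion₂.2 ⟨i, Finset.mem_sdiff.2 ⟨hi, hiD⟩, hzx⟩
  obtain ⟨i, hi, v, hv⟩ := exists_nonempty_interior_of_subset_biUnion hU ⟨x₀, hx₀⟩
    (s \ D).countable_toSet (fun i hi => isClosed_eq (hgc i (Finset.mem_sdiff.1 hi).1) hzc) hcov
  obtain ⟨his, hiD⟩ := Finset.mem_sdiff.1 hi
  exact hiD <| Finset.mem_filter.2
    ⟨his, hz.le_of_eventuallyEq (hgv i his) (EventuallyEq.symm (mem_interior_iff_mem_nhds.1 hv))⟩

end ConcavePieces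

section Tropical

variable {n d : ℕ}

noncomputable def monoEval (w : ℚ × (Fin n → ℚ)) (x : Fin n → ℝ) : ℝ :=
  (w.1 : ℝ) + ∑ j, (w.2 j : ℝ) * x j

lemma continuous_monoEval (w : ℚ × (Fin n → ℚ)) : Continuous (monoEval w) := by
  unfold monoEval
  fun_prop

lemma monoEval_add_smul (w : ℚ × (Fin n → ℚ)) (x y : Fin n → ℝ) {a b : ℝ} (hab : a + b = 1) :
    monoEval w (a • x + b • y) = a * monoEval w x + b * monoEval w y := by
  have hsum : ∑ j, (w.2 j : ℝ) * (a • x + b • y) j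
      = a * ∑ j, (w.2 j : ℝ) * x j + b * ∑ j, (w.2 j : ℝ) * y j := by
    rw [Finset.mul_sum, Finset.mul_sum, ← Finset.sum_add_distrib]
    exact Finset.sum_congr rfl fun j _ => by simp only [Pi.add_apply, Pi.smul_apply]; ring
  simp only [monoEval, hsum]
  linear_combination (-(w.1 : ℝ)) * hab

lemma convexOn_monoEval (w : ℚ × (Fin n → ℚ)) : ConvexOn ℝ univ (monoEval w) :=
  ⟨convex_univ, fun x _ y _ _ _ _ _ hab => (monoEval_add_smul w x y hab).le⟩

lemma concaveOn_monoEval (w : ℚ × (Fin n → ℚ)) : ConcaveOn ℝ univ (monoEval w) :=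
  ⟨convex_univ, fun x _ y _ _ _ _ _ hab => (monoEval_add_smul w x y hab).ge⟩

lemma NPPoly.eval_eq_inf'_s3 (y : NPPoly n) : y.eval = y.monos.inf' y.ne monoEval :=
  funext fun x => (Finset.inf'_apply y.ne monoEval x).symm

lemma NPPoly.concaveOn_eval (y : NPPoly n) : ConcaveOn ℝ univ y.eval := by
  rw [y.eval_eq_inf'_s3]
  exact Finset.inf'_induction _ _ (fun _ h₁ _ h₂ => h₁.inf h₂) fun w _ => concaveOn_monoEval w

lemma NPPoly.exists_eval_eq {z : (Fin n → ℝ) → ℝ} {W : Finset (ℚ × (Fin n → ℚ))}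
    (hW : ∀ x, ∃ w ∈ W, z ≤ monoEval w ∧ monoEval w x = z x) : ∃ y : NPPoly n, y.eval = z := by
  classical
  obtain ⟨w₀, hw₀, hz₀, -⟩ := hW 0
  refine ⟨⟨W.filter fun w => z ≤ monoEval w, ⟨w₀, Finset.mem_filter.2 ⟨hw₀, hz₀⟩⟩⟩, ?_⟩
  funext x
  obtain ⟨w, hw, hzw, hzx⟩ := hW x
  refine le_antisymm ?_ (Finset.le_inf' _ _ fun w hw => (Finset.mem_filter.1 hw).2 x)
  exact (Finset.inf'_le _ (Finset.mem_filter.2 ⟨hw, hzw⟩)).trans_eq hzx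

/-- The solution `t = (c - c' + ⟨J - J', x⟩) / (j - i)` of `c + ⟨J, x⟩ + i t = c' + ⟨J', x⟩ + j t`;
the floors only read the integer coefficients `c`, `c'` as rationals. -/
noncomputable def tieMono (i j : ℕ) (p q : ℝ × (Fin n → ℕ)) : ℚ × (Fin n → ℚ) :=
  (((⌊p.1⌋ : ℚ) - ⌊q.1⌋) / ((j : ℚ) - i), fun k => ((p.2 k : ℚ) - q.2 k) / ((j : ℚ) - i))

lemma monoEval_tieMono {i j : ℕ} (hij : i ≠ j) {p q : ℝ × (Fin n → ℕ)}
    (hp : ∃ c : ℤ, p.1 = c) (hq : ∃ c : ℤ, q.1 = c) {x : Fin n → ℝ} {t : ℝ}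
    (htie : p.1 + ∑ k, (p.2 k : ℝ) * x k + i * t = q.1 + ∑ k, (q.2 k : ℝ) * x k + j * t) :
    monoEval (tieMono i j p q) x = t := by
  obtain ⟨c, hc⟩ := hp
  obtain ⟨c', hc'⟩ := hq
  have hji : (j : ℝ) - i ≠ 0 := sub_ne_zero.2 (Nat.cast_injective.ne hij.symm)
  simp only [monoEval, tieMono, hc, hc', Int.floor_intCast]
  push_cast
  simp only [div_mul_eq_mul_div, ← Finset.sum_div, sub_mul, Finset.sum_sub_distrib]
  rw [← add_div, div_eq_iff hji]
  rw [hc, hc'] at htie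
  linarith

noncomputable def tieCandidates (f : Fin (d+1) → TropPoly n) : Finset (ℚ × (Fin n → ℚ)) :=
  Finset.univ.biUnion fun ij : Fin (d+1) × Fin (d+1) =>
    ((f ij.1).monos ×ˢ (f ij.2).monos).image fun pq => tieMono ij.1 ij.2 pq.1 pq.2

lemma TiesAt.exists_mem_tieCandidates {f : Fin (d+1) → TropPoly n}
    (hint : ∀ i, HasIntCoeffs (f i)) {x : Fin n → ℝ} {t : ℝ} (h : TiesAt f x t) :
    ∃ w ∈ tieCandidates f, monoEval w x = t := by
  obtain ⟨i, j, hij, htie, -⟩ := h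
  obtain ⟨p, hp, hpx⟩ := Finset.exists_mem_eq_inf' (f i).ne fun p => p.1 + ∑ k, (p.2 k : ℝ) * x k
  obtain ⟨q, hq, hqx⟩ := Finset.exists_mem_eq_inf' (f j).ne fun p => p.1 + ∑ k, (p.2 k : ℝ) * x k
  refine ⟨tieMono i j p q, Finset.mem_biUnion.2 ⟨(i, j), Finset.mem_univ _,
    Finset.mem_image.2 ⟨(p, q), Finset.mem_product.2 ⟨hp, hq⟩, rfl⟩⟩, ?_⟩
  refine monoEval_tieMono (Fin.val_injective.ne hij) (hint i p hp) (hint j q hq) ?_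
  simpa only [termVal, TropPoly.eval, hpx, hqx] using htie

lemma finite_resolution_values {f : Fin (d+1) → TropPoly n} (hint : ∀ i, HasIntCoeffs (f i))
    (x : Fin n → ℝ) : ((fun g => g x) '' {g | IsResolution f g}).Finite := by
  refine ((tieCandidates f).image fun w => monoEval w x).finite_toSet.subset ?_
  rintro _ ⟨g, hg, rfl⟩
  obtain ⟨w, hw, hwx⟩ := (hg x).exists_mem_tieCandidates hint
  exact Finset.mem_coe.2 (Finset.mem_image.2 ⟨w, hw, hwx⟩)

end Tropical

/-- If `f_0, ..., f_d` have integer coefficients and `f` admits at least one resolution,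
then it admits a minimal resolution. -/
theorem exists_minimal_resolution {n d : ℕ} (f : Fin (d+1) → TropPoly n)
    (hint : ∀ i, HasIntCoeffs (f i))
    (hex : ∃ y : NPPoly n, IsResolution f y.eval) :
    ∃ ystar : NPPoly n, IsResolution f ystar.eval ∧
      ∀ y : NPPoly n, IsResolution f y.eval → ∀ x, ystar.eval x ≤ y.eval x := by
  set S := NPPoly.eval '' {y : NPPoly n | IsResolution f y.eval}
  have hS : S.Nonempty := hex.elim fun y hy => ⟨y.eval, mem_image_of_mem _ hy⟩
  have hfin (x : Fin n → ℝ) : ((fun g => g x) '' S).Finite :=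
    (finite_resolution_values hint x).subset <| Set.image_mono <| by rintro _ ⟨y, hy, rfl⟩; exact hy
  have hres : IsResolution f (sInf S) := fun x => by
    obtain ⟨_, ⟨y, hy, rfl⟩, hyx⟩ := exists_mem_apply_eq_sInf_apply hS hfin x
    exact hyx ▸ hy x
  have hconc : ConcaveOn ℝ univ (sInf S) :=
    concaveOn_sInf hS hfin <| by rintro _ ⟨y, -, rfl⟩; exact y.concaveOn_eval
  obtain ⟨ystar, hystar⟩ := NPPoly.exists_eval_eq fun x =>
    hconc.exists_dominating_piece (fun w _ => continuous_monoEval w)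
      (fun w _ => convexOn_monoEval w) (fun x => (hres x).exists_mem_tieCandidates hint) x
  refine ⟨ystar, hystar ▸ hres, fun y hy => hystar ▸ ?_⟩
  exact sInf_apply_le_of_finite hfin (mem_image_of_mem _ hy)
end

section
/- Let d ≥ 1 and let f = y^{⊗d} ⊕ ⊕_{0 ≤ i < d} f_i ⊗ y^{⊗i} be a monic tropical polynomial, where f_0, …, f_{d−1} are tropical polynomials in n variables with integer coefficients (monic means the coefficient of y^{⊗d} is the single monomial with coefficient 0 and exponent 0). Then the function y(x) = min_{1 ≤ i ≤ d} f_{d−i}(x)/i is given by the tropical Newton–Puiseux polynomial ⊕_{1 ≤ i ≤ d} f_{d−i}^{⊗(1/i)} (where for f_{d−i} = ⊕_J c_J ⊗ x^{⊗J} one has f_{d−i}^{⊗(1/i)} = ⊕_J (c_J/i) ⊗ x^{⊗(J/i)}), it is a resolution of f, and it is the minimal resolution: every resolution y' of f satisfies y(x) ≤ y'(x) for all x ∈ ℝ^n. -/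
open Finset

/-- The function `x ↦ min_{1 ≤ i ≤ d} f_{d-i}(x) / i`, written here as the minimum over
`j = d - i` ranging over `0, ..., d-1` of `f_j(x) / (d - j)`. -/
noncomputable def minimalCandidate {n d : ℕ} (f : Fin (d+1) → TropPoly n) (hd : 0 < d)
    (x : Fin n → ℝ) : ℝ :=
  (Finset.univ : Finset (Fin d)).inf' ⟨⟨0, hd⟩, Finset.mem_univ _⟩
    fun j => (f j.castSucc).eval x / ((d : ℝ) - (j : ℕ))

/-!
At a point `x`, write `t` for the value of the indeterminate. Monicity makes the last term
`f_d(x) + d·t` equal to `d·t`, so the term of index `j < d` lies below it exactly when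
`f_j(x) ≤ (d - j)·t`, i.e. when `f_j(x)/(d - j) ≤ t`. A minimum attained twice is attained at
some `j < d` that lies below the last term, which gives `min_j f_j(x)/(d - j) ≤ t`. Conversely
for `t` equal to that minimum the last term is minimal and is tied with the term of the index
realizing the minimum. The Newton–Puiseux form holds because tropical powers by `c ≥ 0` and
tropical sums commute with evaluation.
-/

namespace TropPoly

-- Rounding down is the identity on the coefficients of a polynomial with `HasIntCoeffs`.
noncomputable def toNPPoly {n : ℕ} (f : TropPoly n) : NPPoly n :=
  ⟨f.monos.image fun p => ((⌊p.1⌋ : ℚ), fun j => (p.2 j : ℚ)), f.ne.image _⟩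

theorem eval_toNPPoly {n : ℕ} {f : TropPoly n} (hf : HasIntCoeffs f) (x : Fin n → ℝ) :
    f.toNPPoly.eval x = f.eval x := by
  rw [toNPPoly, NPPoly.eval, inf'_image]
  refine inf'_congr _ rfl fun p hp => ?_
  obtain ⟨z, hz⟩ := hf p hp
  simp [hz]

theorem eval_of_monos_eq_singleton_zero {n : ℕ} {f : TropPoly n}
    (h : f.monos = {((0 : ℝ), fun _ => (0 : ℕ))}) (x : Fin n → ℝ) : f.eval x = 0 := by
  simp [eval, h]

end TropPoly

namespace NPPoly

variable {n : ℕ}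

def tropPow (y : NPPoly n) (c : ℚ) : NPPoly n :=
  ⟨y.monos.image fun p => (c * p.1, c • p.2), y.ne.image _⟩

def tropSum {ι : Type*} (s : Finset ι) (hs : s.Nonempty) (Y : ι → NPPoly n) : NPPoly n :=
  ⟨s.biUnion fun i => (Y i).monos, hs.biUnion fun i _ => (Y i).ne⟩

theorem eval_tropPow (y : NPPoly n) {c : ℚ} (hc : 0 ≤ c) (x : Fin n → ℝ) :
    (y.tropPow c).eval x = c * y.eval x := by
  have hc' : (0 : ℝ) ≤ c := by exact_mod_cast hc
  rw [tropPow, eval, eval, inf'_image,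
    apply_inf'_eq_inf'_comp y.ne ((c : ℝ) * ·)
      fun _ _ => (monotone_mul_left_of_nonneg hc').map_min]
  refine inf'_congr _ rfl fun p _ => ?_
  simp [mul_add, mul_sum, mul_assoc]

theorem eval_tropSum {ι : Type*} (s : Finset ι) (hs : s.Nonempty) (Y : ι → NPPoly n)
    (x : Fin n → ℝ) : (tropSum s hs Y).eval x = s.inf' hs fun i => (Y i).eval x :=
  inf'_biUnion _ hs _

end NPPoly

theorem Fin.natCast_sub_val_pos {K : Type*} [Field K] [LinearOrder K] [IsStrictOrderedRing K]
    {d : ℕ} (j : Fin d) : (0 : K) < d - (j : ℕ) :=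
  sub_pos.2 (by exact_mod_cast j.is_lt)

section MinimalCandidate

variable {n d : ℕ} {f : Fin (d+1) → TropPoly n} {x : Fin n → ℝ} {t : ℝ}

/-- `minimalCandidate` proves nonemptiness by a term of type `∃ j, j ∈ univ`, which `rw` and
`simp` do not accept as `univ.Nonempty`. -/
theorem minimalCandidate_eq_inf' (hd : 0 < d) (x : Fin n → ℝ) :
    minimalCandidate f hd x = univ.inf' (univ_nonempty_iff.2 ⟨⟨0, hd⟩⟩)
      fun j : Fin d => (f j.castSucc).eval x / ((d : ℝ) - (j : ℕ)) :=
  rfl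

noncomputable def minimalCandidateNP (f : Fin (d+1) → TropPoly n) (hd : 0 < d) : NPPoly n :=
  NPPoly.tropSum univ (univ_nonempty_iff.2 ⟨⟨0, hd⟩⟩)
    fun j : Fin d => (f j.castSucc).toNPPoly.tropPow (1 / (d - (j : ℕ)))

theorem eval_minimalCandidateNP (hd : 0 < d) (hint : ∀ j : Fin d, HasIntCoeffs (f j.castSucc))
    (x : Fin n → ℝ) : (minimalCandidateNP f hd).eval x = minimalCandidate f hd x := by
  rw [minimalCandidateNP, NPPoly.eval_tropSum, minimalCandidate_eq_inf']
  refine inf'_congr _ rfl fun j _ => ?_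
  rw [NPPoly.eval_tropPow _ (one_div_nonneg.2 (Fin.natCast_sub_val_pos j).le),
    TropPoly.eval_toNPPoly (hint j)]
  push_cast
  ring

theorem minimalCandidate_le_iff (hd : 0 < d) :
    minimalCandidate f hd x ≤ t ↔
      ∃ j : Fin d, (f j.castSucc).eval x ≤ (d - (j : ℕ)) * t := by
  rw [minimalCandidate_eq_inf', inf'_le_iff]
  simp only [mem_univ, true_and]
  exact exists_congr fun j => by rw [div_le_iff₀ (Fin.natCast_sub_val_pos j), mul_comm]

theorem le_minimalCandidate_iff (hd : 0 < d) :
    t ≤ minimalCandidate f hd x ↔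
      ∀ j : Fin d, (d - (j : ℕ)) * t ≤ (f j.castSucc).eval x := by
  rw [minimalCandidate_eq_inf', le_inf'_iff]
  simp only [mem_univ, true_imp_iff]
  exact forall_congr' fun j => by rw [le_div_iff₀ (Fin.natCast_sub_val_pos j), mul_comm]

theorem TiesAt.exists_castSucc_le_last (h : TiesAt f x t) :
    ∃ j : Fin d, termVal f x t j.castSucc ≤ termVal f x t (Fin.last d) := by
  obtain ⟨i₁, i₂, hne, heq, hmin⟩ := h
  rcases Fin.eq_castSucc_or_eq_last i₁ with ⟨j, rfl⟩ | rfl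
  · exact ⟨j, hmin _⟩
  rcases Fin.eq_castSucc_or_eq_last i₂ with ⟨j, rfl⟩ | rfl
  · exact ⟨j, heq.symm.le.trans (hmin _)⟩
  · exact absurd rfl hne

theorem tiesAt_of_forall_last_le
    (hmin : ∀ j : Fin d, termVal f x t (Fin.last d) ≤ termVal f x t j.castSucc)
    (j : Fin d) (hj : termVal f x t j.castSucc ≤ termVal f x t (Fin.last d)) : TiesAt f x t := by
  refine ⟨j.castSucc, Fin.last d, (Fin.castSucc_lt_last j).ne, hj.antisymm (hmin j),
    fun i => ?_⟩
  rcases Fin.eq_castSucc_or_eq_last i with ⟨k, rfl⟩ | rfl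
  · exact hj.trans (hmin k)
  · exact hj

theorem termVal_castSucc_le_last_iff
    (hmonic : (f (Fin.last d)).monos = {((0 : ℝ), fun _ => (0 : ℕ))}) (j : Fin d) :
    termVal f x t j.castSucc ≤ termVal f x t (Fin.last d) ↔
      (f j.castSucc).eval x ≤ (d - (j : ℕ)) * t := by
  simp only [termVal, TropPoly.eval_of_monos_eq_singleton_zero hmonic, Fin.val_castSucc,
    Fin.val_last]
  constructor <;> intro h <;> linarith

theorem termVal_last_le_castSucc_iff
    (hmonic : (f (Fin.last d)).monos = {((0 : ℝ), fun _ => (0 : ℕ))}) (j : Fin d) :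
    termVal f x t (Fin.last d) ≤ termVal f x t j.castSucc ↔
      (d - (j : ℕ)) * t ≤ (f j.castSucc).eval x := by
  simp only [termVal, TropPoly.eval_of_monos_eq_singleton_zero hmonic, Fin.val_castSucc,
    Fin.val_last]
  constructor <;> intro h <;> linarith

theorem isResolution_minimalCandidate
    (hmonic : (f (Fin.last d)).monos = {((0 : ℝ), fun _ => (0 : ℕ))}) (hd : 0 < d) :
    IsResolution f (minimalCandidate f hd) := by
  intro x
  obtain ⟨j, hj⟩ := (minimalCandidate_le_iff hd).1 le_rfl
  exact tiesAt_of_forall_last_le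
    (fun k => (termVal_last_le_castSucc_iff hmonic k).2 ((le_minimalCandidate_iff hd).1 le_rfl k))
    j ((termVal_castSucc_le_last_iff hmonic j).2 hj)

theorem minimalCandidate_le_of_tiesAt
    (hmonic : (f (Fin.last d)).monos = {((0 : ℝ), fun _ => (0 : ℕ))}) (hd : 0 < d)
    (h : TiesAt f x t) : minimalCandidate f hd x ≤ t := by
  obtain ⟨j, hj⟩ := h.exists_castSucc_le_last
  exact (minimalCandidate_le_iff hd).2 ⟨j, (termVal_castSucc_le_last_iff hmonic j).1 hj⟩

end MinimalCandidate

/-- For a monic tropical polynomial `f = y^d ⊕ ⊕_{i<d} f_i ⊗ y^i` (the coefficient of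
`y^d` being the single monomial with coefficient `0` and exponent `0`), the function
`y(x) = min_{1 ≤ i ≤ d} f_{d-i}(x)/i` is given by a tropical Newton-Puiseux polynomial
(namely `⊕_{1 ≤ i ≤ d} f_{d-i}^{⊗(1/i)}`), it is a resolution of `f`, and it is the
minimal resolution. -/
theorem monic_minimal_resolution {n d : ℕ} (hd : 0 < d) (f : Fin (d+1) → TropPoly n)
    (hmonic : (f (Fin.last d)).monos = {((0 : ℝ), fun _ => (0 : ℕ))})
    (hint : ∀ i : Fin d, HasIntCoeffs (f i.castSucc)) :
    (∃ Y : NPPoly n, ∀ x, Y.eval x = minimalCandidate f hd x) ∧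
      IsResolution f (minimalCandidate f hd) ∧
      ∀ y' : NPPoly n, IsResolution f y'.eval → ∀ x, minimalCandidate f hd x ≤ y'.eval x :=
  ⟨⟨minimalCandidateNP f hd, eval_minimalCandidateNP hd hint⟩,
    isResolution_minimalCandidate hmonic hd,
    fun _ hy' x => minimalCandidate_le_of_tiesAt hmonic hd (hy' x)⟩
end

section
/- Let y = ⊕_{I ∈ S} a_I ⊗ x^{⊗I} be a resolution of f = ⊕_{i=0}^d f_i ⊗ y^{⊗i}, and let I ∈ S be such that the polyhedron M_I = { x ∈ ℝ^n : a_I + ⟨I, x⟩ = y(x) } has nonempty interior (full dimension n). For each pair of indices 0 ≤ i_1 < i_2 ≤ d and monomials (c_1, J_1) of f_{i_1} and (c_2, J_2) of f_{i_2} satisfying J_1 + i_1·I = J_2 + i_2·I and c_1 + i_1·a_I = c_2 + i_2·a_I, let M_{I,i_1,J_1,i_2,J_2} ⊆ M_I be the set of points x ∈ M_I at which c_1 + ⟨J_1, x⟩ + i_1·(a_I + ⟨I, x⟩) equals the minimum, over all 0 ≤ i ≤ d and all monomials (c, J) of f_i, of c + ⟨J, x⟩ + i·(a_I + ⟨I,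 x⟩). Then the sets M_{I,i_1,J_1,i_2,J_2} having nonempty interior constitute a partition of M_I: their union is all of M_I, and any two of them either coincide or intersect in a set with empty interior (dimension less than n). -/
open Finset

/-- The polyhedron `M_I` of points where the monomial `(a, I)` of the Newton-Puiseux
polynomial `y` attains the minimum defining `y`. -/
def MIset {n : ℕ} (y : NPPoly n) (a : ℚ) (I : Fin n → ℚ) : Set (Fin n → ℝ) :=
  {x | (a : ℝ) + ∑ j, (I j : ℝ) * x j = y.eval x}

/-- The value at `x` of the monomial `(c, J)` of `f_i` multiplied (tropically) by the
`i`-th power of the monomial `(a, I)`. -/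
noncomputable def cellVal {n d : ℕ} (i : Fin (d+1)) (c : ℝ) (J : Fin n → ℕ) (a : ℚ)
    (I : Fin n → ℚ) (x : Fin n → ℝ) : ℝ :=
  c + ∑ j, (J j : ℝ) * x j + (i : ℕ) * ((a : ℝ) + ∑ j, (I j : ℝ) * x j)

/-- Condition (7): the monomials `(c₁ ⊗ x^{J₁}) ⊗ (a ⊗ x^{I})^{i₁}` and
`(c₂ ⊗ x^{J₂}) ⊗ (a ⊗ x^{I})^{i₂}` coincide. -/
def Compatible {n d : ℕ} (i₁ i₂ : Fin (d+1)) (c₁ : ℝ) (J₁ : Fin n → ℕ) (c₂ : ℝ)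
    (J₂ : Fin n → ℕ) (a : ℚ) (I : Fin n → ℚ) : Prop :=
  (∀ j, (J₁ j : ℚ) + (i₁ : ℕ) * I j = (J₂ j : ℚ) + (i₂ : ℕ) * I j) ∧
    c₁ + (i₁ : ℕ) * (a : ℝ) = c₂ + (i₂ : ℕ) * (a : ℝ)

/-- The subset `M_{I,i₁,J₁,i₂,J₂}` of `M_I` of the points at which the monomial
`(c₁ ⊗ x^{J₁}) ⊗ (a ⊗ x^{I})^{i₁}` attains the minimum among all the monomials
`(c ⊗ x^{J}) ⊗ (a ⊗ x^{I})^{i}` for monomials `(c, J)` of `f_i`, `0 ≤ i ≤ d`. -/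
def cellSet {n d : ℕ} (f : Fin (d+1) → TropPoly n) (y : NPPoly n) (a : ℚ) (I : Fin n → ℚ)
    (i₁ : Fin (d+1)) (c₁ : ℝ) (J₁ : Fin n → ℕ) : Set (Fin n → ℝ) :=
  {x ∈ MIset y a I | ∀ i : Fin (d+1), ∀ p ∈ (f i).monos,
    cellVal i₁ c₁ J₁ a I x ≤ cellVal i p.1 p.2 a I x}

/-- The family of all the full-dimensional sets `M_{I,i₁,J₁,i₂,J₂}` for pairs of monomials
satisfying condition (7). -/
def cellFamily {n d : ℕ} (f : Fin (d+1) → TropPoly n) (y : NPPoly n) (a : ℚ)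
    (I : Fin n → ℚ) : Set (Set (Fin n → ℝ)) :=
  {M | ∃ (i₁ i₂ : Fin (d+1)) (c₁ c₂ : ℝ) (J₁ J₂ : Fin n → ℕ),
    i₁ < i₂ ∧ (c₁, J₁) ∈ (f i₁).monos ∧ (c₂, J₂) ∈ (f i₂).monos ∧
    Compatible i₁ i₂ c₁ J₁ c₂ J₂ a I ∧ M = cellSet f y a I i₁ c₁ J₁ ∧
    (interior M).Nonempty}

/-!
On `M_I` we have `y(x) = a + ⟨I, x⟩`, so the term `f_i(x) + i·y(x)` is the minimum of the affine
functions `cellVal i c J a I` over the monomials `(c, J)` of `f_i`, and the closed sets `cellSet`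
where one of these affine functions is minimal cover `M_I`. Affine functions that agree on an open
set are equal, which makes two cells coincide as soon as their intersection has interior. On the
interior of a full-dimensional cell the resolution property gives, pointwise, a tie with a monomial
of some `f_{i₂}`, `i₂ ≠ i₁`; finitely many closed tie sets cover an open set, so one of them has
interior and the two monomials satisfy (7). Finally, finitely many closed cells with empty interior
cannot cover an open set, so the full-dimensional cells cover the interior of the convex set `M_I`,
hence its closure.
-/

open Filter Topology

theorem IsOpen.exists_inter_interior_nonempty_of_subset_biUnion {X ι : Type*}
    [TopologicalSpace X] {O : Set X} (hO : IsOpen O) (hne : O.Nonempty) {s : Finset ι}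
    {F : ι → Set X} (hF : ∀ i ∈ s, IsClosed (F i)) (hcover : O ⊆ ⋃ i ∈ s, F i) :
    ∃ i ∈ s, (O ∩ interior (F i)).Nonempty := by
  classical
  induction s using Finset.induction_on generalizing O with
  | empty => simp_all [Set.subset_empty_iff, Set.nonempty_iff_ne_empty]
  | insert i s hi ih =>
    rw [Finset.set_biUnion_insert] at hcover
    by_cases hOF : O ⊆ F i
    · exact ⟨i, mem_insert_self i s, by rwa [Set.inter_eq_left.mpr (interior_maximal hOF hO)]⟩
    · obtain ⟨j, hj, hne'⟩ := ih (hO.sdiff (hF i (mem_insert_self i s)))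
        (Set.sdiff_nonempty.mpr hOF) (fun j hj => hF j (mem_insert_of_mem hj))
        fun x hx => (hcover hx.1).resolve_left hx.2
      exact ⟨j, mem_insert_of_mem hj, hne'.mono (Set.inter_subset_inter_left _ Set.sdiff_subset)⟩

theorem eq_and_eq_of_add_dotProduct_eventuallyEq {𝕜 ι : Type*} [NontriviallyNormedField 𝕜]
    [Fintype ι] [DecidableEq ι] {c c' : 𝕜} {v w : ι → 𝕜} {x₀ : ι → 𝕜}
    (h : (fun x => c + v ⬝ᵥ x) =ᶠ[𝓝 x₀] fun x => c' + w ⬝ᵥ x) : c = c' ∧ v = w := by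
  have hline : ∀ u : ι → 𝕜, ∀ᶠ t : 𝕜 in 𝓝 0,
      c + v ⬝ᵥ x₀ + t * (v ⬝ᵥ u) = c' + w ⬝ᵥ x₀ + t * (w ⬝ᵥ u) := fun u => by
    have hcont : Continuous fun t : 𝕜 => x₀ + t • u := by fun_prop
    have := hcont.tendsto' 0 x₀ (by simp) |>.eventually h
    refine this.mono fun t ht => ?_
    simp only [dotProduct_add, dotProduct_smul, smul_eq_mul] at ht
    linear_combination ht
  have hbase : c + v ⬝ᵥ x₀ = c' + w ⬝ᵥ x₀ := by simpa using (hline 0).self_of_nhds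
  have hvw : v = w := funext fun j => by
    obtain ⟨t, ht, ht0⟩ := ((hline (Pi.single j 1)).filter_mono nhdsWithin_le_nhds
      |>.and self_mem_nhdsWithin).exists (f := 𝓝[≠] (0 : 𝕜))
    simp only [dotProduct_single, mul_one, hbase, add_right_inj] at ht
    exact mul_left_cancel₀ ht0 ht
  exact ⟨by simpa [hvw] using hbase, hvw⟩

theorem convex_setOf_add_dotProduct_le {𝕜 ι : Type*} [Field 𝕜] [LinearOrder 𝕜]
    [IsStrictOrderedRing 𝕜] [Fintype ι] (c c' : 𝕜) (v w : ι → 𝕜) :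
    Convex 𝕜 {x : ι → 𝕜 | c + v ⬝ᵥ x ≤ c' + w ⬝ᵥ x} := by
  have h : {x : ι → 𝕜 | c + v ⬝ᵥ x ≤ c' + w ⬝ᵥ x} = {x | (v - w) ⬝ᵥ x ≤ c' - c} := by
    ext x
    simp only [Set.mem_ofPred_eq, sub_dotProduct]
    constructor <;> intro hx <;> linarith
  rw [h]
  exact convex_halfSpace_le ⟨fun x z => dotProduct_add _ x z, fun t x => dotProduct_smul t _ x⟩ _

section Cells

variable {n d : ℕ}

theorem NPPoly.continuous_eval (y : NPPoly n) : Continuous y.eval :=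
  Continuous.finset_inf'_apply y.ne fun _ _ => by fun_prop

theorem continuous_cellVal (i : Fin (d+1)) (c : ℝ) (J : Fin n → ℕ) (a : ℚ) (I : Fin n → ℚ) :
    Continuous (cellVal i c J a I) := by
  unfold cellVal
  fun_prop

theorem cellVal_eq_add_dotProduct (i : Fin (d+1)) (c : ℝ) (J : Fin n → ℕ) (a : ℚ)
    (I : Fin n → ℚ) :
    cellVal i c J a I = fun x => (c + (i : ℕ) * (a : ℝ)) +
      (fun j => (J j : ℝ) + (i : ℕ) * (I j : ℝ)) ⬝ᵥ x := by
  ext x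
  simp only [cellVal, dotProduct, add_mul, sum_add_distrib, mul_assoc, ← mul_sum]
  ring

theorem compatible_of_eventuallyEq {i₁ i₂ : Fin (d+1)} {c₁ c₂ : ℝ} {J₁ J₂ : Fin n → ℕ}
    {a : ℚ} {I : Fin n → ℚ} {x₀ : Fin n → ℝ}
    (h : cellVal i₁ c₁ J₁ a I =ᶠ[𝓝 x₀] cellVal i₂ c₂ J₂ a I) :
    Compatible i₁ i₂ c₁ J₁ c₂ J₂ a I := by
  rw [cellVal_eq_add_dotProduct, cellVal_eq_add_dotProduct] at h
  obtain ⟨hc, hv⟩ := eq_and_eq_of_add_dotProduct_eventuallyEq h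
  exact ⟨fun j => by exact_mod_cast congrFun hv j, hc⟩

theorem Compatible.cellVal_eq {i₁ i₂ : Fin (d+1)} {c₁ c₂ : ℝ} {J₁ J₂ : Fin n → ℕ}
    {a : ℚ} {I : Fin n → ℚ} (h : Compatible i₁ i₂ c₁ J₁ c₂ J₂ a I) :
    cellVal i₁ c₁ J₁ a I = cellVal i₂ c₂ J₂ a I := by
  have hv : (fun j => (J₁ j : ℝ) + (i₁ : ℕ) * (I j : ℝ))
      = fun j => (J₂ j : ℝ) + (i₂ : ℕ) * (I j : ℝ) :=
    funext fun j => by exact_mod_cast h.1 j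
  rw [cellVal_eq_add_dotProduct, cellVal_eq_add_dotProduct, h.2, hv]

variable {f : Fin (d+1) → TropPoly n} {y : NPPoly n} {a : ℚ} {I : Fin n → ℚ}

theorem isClosed_MIset : IsClosed (MIset y a I) :=
  isClosed_eq (by fun_prop) y.continuous_eval

theorem MIset_eq_setOf_forall_le (hmem : (a, I) ∈ y.monos) :
    MIset y a I = {x | ∀ p ∈ y.monos, (a : ℝ) + (fun j => (I j : ℝ)) ⬝ᵥ x
      ≤ (p.1 : ℝ) + (fun j => (p.2 j : ℝ)) ⬝ᵥ x} := by
  ext x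
  exact ⟨fun hx p hp => hx ▸ inf'_le _ hp,
    fun hx => le_antisymm (le_inf' _ _ hx) (inf'_le _ hmem)⟩

theorem convex_MIset (hmem : (a, I) ∈ y.monos) : Convex ℝ (MIset y a I) := by
  rw [MIset_eq_setOf_forall_le hmem, Set.ofPred_forall]
  exact convex_iInter fun p => by
    rw [Set.ofPred_forall]
    exact convex_iInter fun _ => convex_setOf_add_dotProduct_le _ _ _ _

theorem isClosed_cellSet (i₁ : Fin (d+1)) (c₁ : ℝ) (J₁ : Fin n → ℕ) :
    IsClosed (cellSet f y a I i₁ c₁ J₁) := by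
  have h : cellSet f y a I i₁ c₁ J₁ = MIset y a I ∩ ⋂ i, ⋂ p ∈ (f i).monos,
      {x | cellVal i₁ c₁ J₁ a I x ≤ cellVal i p.1 p.2 a I x} := by
    ext x
    simp [cellSet]
  rw [h]
  exact isClosed_MIset.inter <| isClosed_iInter fun _ => isClosed_biInter fun _ _ =>
    isClosed_le (continuous_cellVal _ _ _ _ _) (continuous_cellVal _ _ _ _ _)

theorem cellSet_congr {i₁ i₂ : Fin (d+1)} {c₁ c₂ : ℝ} {J₁ J₂ : Fin n → ℕ}
    (h : cellVal i₁ c₁ J₁ a I = cellVal i₂ c₂ J₂ a I) :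
    cellSet f y a I i₁ c₁ J₁ = cellSet f y a I i₂ c₂ J₂ := by
  unfold cellSet
  rw [h]

theorem exists_mem_cellSet {x : Fin n → ℝ} (hx : x ∈ MIset y a I) :
    ∃ s ∈ univ.sigma fun i => (f i).monos, x ∈ cellSet f y a I s.1 s.2.1 s.2.2 := by
  obtain ⟨q, hq⟩ := (f 0).ne
  obtain ⟨s, hs, hmin⟩ := exists_min_image (univ.sigma fun i => (f i).monos)
    (fun s => cellVal s.1 s.2.1 s.2.2 a I x) ⟨⟨0, q⟩, mem_sigma.2 ⟨mem_univ 0, hq⟩⟩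
  exact ⟨s, hs, hx, fun i p hp => hmin ⟨i, p⟩ (mem_sigma.2 ⟨mem_univ i, hp⟩)⟩

theorem termVal_le_cellVal {x : Fin n → ℝ} (hx : x ∈ MIset y a I) {i : Fin (d+1)}
    {q : ℝ × (Fin n → ℕ)} (hq : q ∈ (f i).monos) :
    termVal f x (y.eval x) i ≤ cellVal i q.1 q.2 a I x := by
  rw [termVal, ← hx, cellVal]
  exact add_le_add_left (inf'_le _ hq) _

theorem exists_cellVal_eq_termVal {x : Fin n → ℝ} (hx : x ∈ MIset y a I) (i : Fin (d+1)) :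
    ∃ q ∈ (f i).monos, cellVal i q.1 q.2 a I x = termVal f x (y.eval x) i := by
  obtain ⟨q, hq, h⟩ := exists_mem_eq_inf' (f i).ne fun p => p.1 + ∑ j, (p.2 j : ℝ) * x j
  exact ⟨q, hq, by rw [termVal, ← hx, cellVal, TropPoly.eval, h]⟩

theorem exists_cellVal_eq_of_mem_cellSet (hres : IsResolution f y.eval) {i₁ : Fin (d+1)}
    {c₁ : ℝ} {J₁ : Fin n → ℕ} (h₁ : (c₁, J₁) ∈ (f i₁).monos) {x : Fin n → ℝ}
    (hx : x ∈ cellSet f y a I i₁ c₁ J₁) :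
    ∃ i₂ ≠ i₁, ∃ p ∈ (f i₂).monos, cellVal i₁ c₁ J₁ a I x = cellVal i₂ p.1 p.2 a I x := by
  obtain ⟨hxM, hmin⟩ := hx
  obtain ⟨i₂, hne, hi₂⟩ : ∃ i₂ ≠ i₁, ∀ i, termVal f x (y.eval x) i₂ ≤ termVal f x (y.eval x) i := by
    obtain ⟨j₁, j₂, hj, heq, hle⟩ := hres x
    by_cases h : j₁ = i₁
    · exact ⟨j₂, h ▸ hj.symm, fun i => heq ▸ hle i⟩
    · exact ⟨j₁, h, hle⟩
  obtain ⟨p, hp, hpeq⟩ := exists_cellVal_eq_termVal (f := f) hxM i₂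
  refine ⟨i₂, hne, p, hp, le_antisymm (hmin i₂ p hp) ?_⟩
  calc cellVal i₂ p.1 p.2 a I x = termVal f x (y.eval x) i₂ := hpeq
    _ ≤ termVal f x (y.eval x) i₁ := hi₂ i₁
    _ ≤ cellVal i₁ c₁ J₁ a I x := termVal_le_cellVal hxM h₁

theorem cellSet_mem_cellFamily (hres : IsResolution f y.eval) {i₁ : Fin (d+1)} {c₁ : ℝ}
    {J₁ : Fin n → ℕ} (h₁ : (c₁, J₁) ∈ (f i₁).monos)
    (hC : (interior (cellSet f y a I i₁ c₁ J₁)).Nonempty) :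
    cellSet f y a I i₁ c₁ J₁ ∈ cellFamily f y a I := by
  classical
  let T := (univ.sigma fun i => (f i).monos).filter (·.1 ≠ i₁)
  have hcover : interior (cellSet f y a I i₁ c₁ J₁) ⊆
      ⋃ s ∈ T, {x | cellVal i₁ c₁ J₁ a I x = cellVal s.1 s.2.1 s.2.2 a I x} := fun x hx => by
    obtain ⟨i₂, hne, p, hp, heq⟩ := exists_cellVal_eq_of_mem_cellSet hres h₁ (interior_subset hx)
    exact Set.mem_iUnion₂.2 ⟨⟨i₂, p⟩, by simp [T, hp, hne], heq⟩
  obtain ⟨s, hs, x₀, -, hx₀⟩ := isOpen_interior.exists_inter_interior_nonempty_of_subset_biUnion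
    hC (fun _ _ => isClosed_eq (continuous_cellVal _ _ _ _ _) (continuous_cellVal _ _ _ _ _))
    hcover
  have heq : cellVal i₁ c₁ J₁ a I =ᶠ[𝓝 x₀] cellVal s.1 s.2.1 s.2.2 a I :=
    mem_interior_iff_mem_nhds.1 hx₀
  obtain ⟨hs, hne⟩ : s.2 ∈ (f s.1).monos ∧ s.1 ≠ i₁ := by simpa [T] using hs
  rcases hne.lt_or_gt with hlt | hgt
  · exact ⟨s.1, i₁, s.2.1, c₁, s.2.2, J₁, hlt, hs, h₁, compatible_of_eventuallyEq heq.symm,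
      cellSet_congr (compatible_of_eventuallyEq heq).cellVal_eq, hC⟩
  · exact ⟨i₁, s.1, c₁, s.2.1, J₁, s.2.2, hgt, h₁, hs, compatible_of_eventuallyEq heq, rfl, hC⟩

theorem cellSet_eq_or_interior_inter_eq_empty {i₁ i₂ : Fin (d+1)} {c₁ c₂ : ℝ}
    {J₁ J₂ : Fin n → ℕ} (h₁ : (c₁, J₁) ∈ (f i₁).monos) (h₂ : (c₂, J₂) ∈ (f i₂).monos) :
    cellSet f y a I i₁ c₁ J₁ = cellSet f y a I i₂ c₂ J₂ ∨
      interior (cellSet f y a I i₁ c₁ J₁ ∩ cellSet f y a I i₂ c₂ J₂) = ∅ := by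
  refine or_iff_not_imp_right.2 fun hne => ?_
  obtain ⟨x₀, hx₀⟩ := Set.nonempty_iff_ne_empty.2 hne
  have heq : cellVal i₁ c₁ J₁ a I =ᶠ[𝓝 x₀] cellVal i₂ c₂ J₂ a I :=
    mem_of_superset (mem_interior_iff_mem_nhds.1 hx₀) fun x hx =>
      le_antisymm (hx.1.2 i₂ _ h₂) (hx.2.2 i₁ _ h₁)
  exact cellSet_congr (compatible_of_eventuallyEq heq).cellVal_eq

theorem isClosed_sUnion_cellFamily : IsClosed (⋃₀ cellFamily f y a I) := by
  have hfin : (cellFamily f y a I).Finite :=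
    ((univ.sigma fun i => (f i).monos).finite_toSet.image
      fun s => cellSet f y a I s.1 s.2.1 s.2.2).subset <| by
        rintro _ ⟨i₁, -, c₁, -, J₁, -, -, h₁, -, -, rfl, -⟩
        exact ⟨⟨i₁, c₁, J₁⟩, by simpa using h₁, rfl⟩
  rw [Set.sUnion_eq_biUnion]
  exact hfin.isClosed_biUnion fun _ ⟨_, _, _, _, _, _, _, _, _, _, hM, _⟩ =>
    hM ▸ isClosed_cellSet _ _ _

theorem interior_MIset_subset_sUnion_cellFamily (hres : IsResolution f y.eval) :
    interior (MIset y a I) ⊆ ⋃₀ cellFamily f y a I := by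
  intro z hz
  by_contra hzU
  have hcover : interior (MIset y a I) \ ⋃₀ cellFamily f y a I ⊆
      ⋃ s ∈ univ.sigma fun i => (f i).monos, cellSet f y a I s.1 s.2.1 s.2.2 := fun x hx => by
    obtain ⟨s, hs, hxs⟩ := exists_mem_cellSet (f := f) (interior_subset hx.1)
    exact Set.mem_biUnion hs hxs
  have hopen : IsOpen (interior (MIset y a I) \ ⋃₀ cellFamily f y a I) :=
    isOpen_interior.sdiff isClosed_sUnion_cellFamily
  obtain ⟨s, hs, w, hwO, hwC⟩ := hopen.exists_inter_interior_nonempty_of_subset_biUnion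
    ⟨z, hz, hzU⟩ (fun _ _ => isClosed_cellSet _ _ _) hcover
  exact hwO.2 ⟨_, cellSet_mem_cellFamily hres (mem_sigma.1 hs).2 ⟨w, hwC⟩, interior_subset hwC⟩

theorem MIset_subset_sUnion_cellFamily (hres : IsResolution f y.eval) (hmem : (a, I) ∈ y.monos)
    (hfull : (interior (MIset y a I)).Nonempty) :
    MIset y a I ⊆ ⋃₀ cellFamily f y a I :=
  calc MIset y a I ⊆ closure (MIset y a I) := subset_closure
    _ = closure (interior (MIset y a I)) :=
      ((convex_MIset hmem).closure_interior_eq_closure_of_nonempty_interior hfull).symm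
    _ ⊆ ⋃₀ cellFamily f y a I :=
      closure_minimal (interior_MIset_subset_sUnion_cellFamily hres) isClosed_sUnion_cellFamily

end Cells

/-- If `y` is a resolution of `f` and the cell `M_I` of a monomial `(a, I)` of `y` is
full-dimensional, then the full-dimensional sets `M_{I,i₁,J₁,i₂,J₂}` form a partition of
`M_I`: their union is `M_I`, and any two of them either coincide or intersect in a set with
empty interior. -/
theorem cellFamily_partitions {n d : ℕ} (f : Fin (d+1) → TropPoly n) (y : NPPoly n)
    (hres : IsResolution f y.eval) (a : ℚ) (I : Fin n → ℚ) (hmem : (a, I) ∈ y.monos)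
    (hfull : (interior (MIset y a I)).Nonempty) :
    ⋃₀ cellFamily f y a I = MIset y a I ∧
      ∀ A ∈ cellFamily f y a I, ∀ B ∈ cellFamily f y a I,
        A = B ∨ interior (A ∩ B) = (∅ : Set (Fin n → ℝ)) := by
  refine ⟨(Set.sUnion_subset ?_).antisymm (MIset_subset_sUnion_cellFamily hres hmem hfull), ?_⟩
  · rintro _ ⟨_, _, _, _, _, _, _, _, _, _, rfl, _⟩ x hx
    exact hx.1
  · rintro _ ⟨_, _, _, _, _, _, _, h₁, _, _, rfl, _⟩ _ ⟨_, _, _, _, _, _, _, h₁', _, _, rfl, _⟩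
    exact cellSet_eq_or_interior_inter_eq_empty h₁ h₁'
end

section
/- Let y = ⊕_{I ∈ S} a_I ⊗ x^{⊗I} be a resolution of f = ⊕_{i=0}^d f_i ⊗ y^{⊗i}, and let I ∈ S be such that the polyhedron M_I = { x ∈ ℝ^n : a_I + ⟨I, x⟩ = y(x) } has nonempty interior. Then there exist indices 0 ≤ i_1 < i_2 ≤ d and monomials (c_1, J_1) of f_{i_1} and (c_2, J_2) of f_{i_2} such that J_1 + i_1·I = J_2 + i_2·I and c_1 + i_1·a_I = c_2 + i_2·a_I; in particular a_I = (c_1 − c_2)/(i_2 − i_1) and I = (J_1 − J_2)/(i_2 − i_1), so each such coefficient a_I takes one of at most finitely many values determined by the monomials of f_0, …, f_d. -/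
open Finset

lemma finUnion_interior_empty {X ι : Type*} [TopologicalSpace X] (s : Finset ι)
    (C : ι → Set X) (hc : ∀ p ∈ s, IsClosed (C p)) (hi : ∀ p ∈ s, interior (C p) = ∅) :
    interior (⋃ p ∈ s, C p) = ∅ := by
  classical
  induction s using Finset.cons_induction with
  | empty => simp
  | cons p s hp ih =>
    rw [Finset.cons_eq_insert, Finset.set_biUnion_insert]
    rw [interior_union_isClosed_of_interior_empty (hc p (Finset.mem_cons_self p s))
      (ih (fun q hq => hc q (Finset.mem_cons_of_mem hq))
        (fun q hq => hi q (Finset.mem_cons_of_mem hq)))]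
    exact hi p (Finset.mem_cons_self p s)

lemma affine_eq_of_interior {n : ℕ} (b₁ b₂ : ℝ) (w₁ w₂ : Fin n → ℝ)
    (h : (interior {x : Fin n → ℝ | b₁ + ∑ j, w₁ j * x j = b₂ + ∑ j, w₂ j * x j}).Nonempty) :
    b₁ = b₂ ∧ ∀ j, w₁ j = w₂ j := by
  classical
  obtain ⟨x₀, hx₀⟩ := h
  obtain ⟨ε, hε, hball⟩ := Metric.isOpen_iff.1 isOpen_interior x₀ hx₀
  have hS : ∀ x ∈ Metric.ball x₀ ε, b₁ + ∑ j, w₁ j * x j = b₂ + ∑ j, w₂ j * x j := by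
    intro x hx
    have hx2 : x ∈ {x : Fin n → ℝ | b₁ + ∑ j, w₁ j * x j = b₂ + ∑ j, w₂ j * x j} :=
      interior_subset (hball hx)
    exact hx2
  have hw : ∀ k, w₁ k = w₂ k := by
    intro k
    set t : ℝ := ε / 2 with ht_def
    have ht : 0 < t := by positivity
    have hx' : Function.update x₀ k (x₀ k + t) ∈ Metric.ball x₀ ε := by
      rw [Metric.mem_ball, dist_pi_lt_iff hε]
      intro j
      rcases eq_or_ne j k with rfl | hj
      · rw [Function.update_self]
        have : dist (x₀ j + t) (x₀ j) = t := by
          rw [Real.dist_eq]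
          have : x₀ j + t - x₀ j = t := by ring
          rw [this, abs_of_pos ht]
        rw [this]; linarith
      · rw [Function.update_of_ne hj, dist_self]; exact hε
    have h1 := hS _ hx'
    have h0 := hS x₀ (Metric.mem_ball_self hε)
    have hsum : ∀ w : Fin n → ℝ,
        ∑ j, w j * Function.update x₀ k (x₀ k + t) j = (∑ j, w j * x₀ j) + w k * t := by
      intro w
      have : ∀ j, w j * Function.update x₀ k (x₀ k + t) j
          = w j * x₀ j + (if j = k then w k * t else 0) := by
        intro j
        rcases eq_or_ne j k with rfl | hj
        · simp [Function.update_self, mul_add]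
        · simp [Function.update_of_ne hj, hj]
      rw [Finset.sum_congr rfl fun j _ => this j, Finset.sum_add_distrib, Finset.sum_ite_eq'
        , if_pos (Finset.mem_univ k)]
    rw [hsum w₁, hsum w₂] at h1
    have : w₁ k * t = w₂ k * t := by linarith
    exact mul_right_cancel₀ (ne_of_gt ht) this
  refine ⟨?_, hw⟩
  have h0 := hS x₀ (Metric.mem_ball_self hε)
  have : ∑ j, w₁ j * x₀ j = ∑ j, w₂ j * x₀ j :=
    Finset.sum_congr rfl fun j _ => by rw [hw j]
  linarith

lemma cellVal_eq {n d : ℕ} (i : Fin (d+1)) (c : ℝ) (J : Fin n → ℕ) (a : ℚ)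
    (I : Fin n → ℚ) (x : Fin n → ℝ) :
    cellVal i c J a I x
      = (c + (i : ℕ) * (a : ℝ)) + ∑ j, ((J j : ℝ) + (i : ℕ) * (I j : ℝ)) * x j := by
  simp only [cellVal, add_mul, Finset.sum_add_distrib, mul_add, Finset.mul_sum]
  ring_nf

lemma conclude_aux {n d : ℕ} {f : Fin (d+1) → TropPoly n} {a : ℚ} {I : Fin n → ℚ}
    {i₁ i₂ : Fin (d+1)} {c₁ c₂ : ℝ} {J₁ J₂ : Fin n → ℕ}
    (hlt : i₁ < i₂) (hm₁ : (c₁, J₁) ∈ (f i₁).monos) (hm₂ : (c₂, J₂) ∈ (f i₂).monos)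
    (hb : c₁ + (i₁ : ℕ) * (a : ℝ) = c₂ + (i₂ : ℕ) * (a : ℝ))
    (hw : ∀ j, (J₁ j : ℝ) + (i₁ : ℕ) * (I j : ℝ) = (J₂ j : ℝ) + (i₂ : ℕ) * (I j : ℝ)) :
    ∃ (i₁ i₂ : Fin (d+1)) (c₁ c₂ : ℝ) (J₁ J₂ : Fin n → ℕ),
      i₁ < i₂ ∧ (c₁, J₁) ∈ (f i₁).monos ∧ (c₂, J₂) ∈ (f i₂).monos ∧
      Compatible i₁ i₂ c₁ J₁ c₂ J₂ a I ∧
      (a : ℝ) = (c₁ - c₂) / (((i₂ : ℕ) : ℝ) - ((i₁ : ℕ) : ℝ)) ∧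
      ∀ j, I j = ((J₁ j : ℚ) - (J₂ j : ℚ)) / (((i₂ : ℕ) : ℚ) - ((i₁ : ℕ) : ℚ)) := by
  have hnatlt : (i₁ : ℕ) < (i₂ : ℕ) := hlt
  have hRne : ((i₂ : ℕ) : ℝ) - ((i₁ : ℕ) : ℝ) ≠ 0 := by
    have : ((i₁ : ℕ) : ℝ) < ((i₂ : ℕ) : ℝ) := by exact_mod_cast hnatlt
    linarith
  have hQne : ((i₂ : ℕ) : ℚ) - ((i₁ : ℕ) : ℚ) ≠ 0 := by
    have : ((i₁ : ℕ) : ℚ) < ((i₂ : ℕ) : ℚ) := by exact_mod_cast hnatlt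
    linarith
  refine ⟨i₁, i₂, c₁, c₂, J₁, J₂, hlt, hm₁, hm₂, ⟨?_, hb⟩, ?_, ?_⟩
  · intro j
    exact_mod_cast hw j
  · rw [eq_div_iff hRne]
    linear_combination -hb
  · intro j
    have hj : (J₁ j : ℚ) + (i₁ : ℕ) * I j = (J₂ j : ℚ) + (i₂ : ℕ) * I j := by
      exact_mod_cast hw j
    rw [eq_div_iff hQne]
    linear_combination -hj

/-- If `y` is a resolution of `f` and the cell `M_I` of a monomial `(a, I)` of `y` is
full-dimensional, then there are indices `i₁ < i₂` and monomials `(c₁, J₁)` of `f_{i₁}`,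
`(c₂, J₂)` of `f_{i₂}` satisfying condition (7); in particular
`a = (c₁ - c₂)/(i₂ - i₁)` and `I = (J₁ - J₂)/(i₂ - i₁)`, so the coefficient `a` takes one
of finitely many values determined by the monomials of `f_0, ..., f_d`. -/
theorem coefficient_determined_of_fullDim {n d : ℕ} (f : Fin (d+1) → TropPoly n)
    (y : NPPoly n) (hres : IsResolution f y.eval) (a : ℚ) (I : Fin n → ℚ)
    (hmem : (a, I) ∈ y.monos) (hfull : (interior (MIset y a I)).Nonempty) :
    ∃ (i₁ i₂ : Fin (d+1)) (c₁ c₂ : ℝ) (J₁ J₂ : Fin n → ℕ),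
      i₁ < i₂ ∧ (c₁, J₁) ∈ (f i₁).monos ∧ (c₂, J₂) ∈ (f i₂).monos ∧
      Compatible i₁ i₂ c₁ J₁ c₂ J₂ a I ∧
      (a : ℝ) = (c₁ - c₂) / (((i₂ : ℕ) : ℝ) - ((i₁ : ℕ) : ℝ)) ∧
      ∀ j, I j = ((J₁ j : ℚ) - (J₂ j : ℚ)) / (((i₂ : ℕ) : ℚ) - ((i₁ : ℕ) : ℚ)) := by
  classical
  set M : Finset (Fin (d+1) × ℝ × (Fin n → ℕ)) :=
    Finset.univ.biUnion (fun i => (f i).monos.image fun m => (i, m)) with hM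
  set Q : Finset ((Fin (d+1) × ℝ × (Fin n → ℕ)) × (Fin (d+1) × ℝ × (Fin n → ℕ))) :=
    (M ×ˢ M).filter (fun p => p.1.1 ≠ p.2.1) with hQ
  set C : (Fin (d+1) × ℝ × (Fin n → ℕ)) × (Fin (d+1) × ℝ × (Fin n → ℕ)) → Set (Fin n → ℝ) :=
    fun p => {x | cellVal p.1.1 p.1.2.1 p.1.2.2 a I x = cellVal p.2.1 p.2.2.1 p.2.2.2 a I x}
    with hC
  have hMmem : ∀ (i : Fin (d+1)) (c : ℝ) (J : Fin n → ℕ), (c, J) ∈ (f i).monos →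
      (i, c, J) ∈ M := by
    intro i c J h
    rw [hM, Finset.mem_biUnion]
    exact ⟨i, Finset.mem_univ i, Finset.mem_image.2 ⟨(c, J), h, rfl⟩⟩
  have hcover : MIset y a I ⊆ ⋃ p ∈ Q, C p := by
    intro x hx
    obtain ⟨i₁, i₂, hne, heq, -⟩ := hres x
    obtain ⟨⟨c₁, J₁⟩, hm₁, he₁⟩ :=
      Finset.exists_mem_eq_inf' (f i₁).ne (fun p => p.1 + ∑ j, (p.2 j : ℝ) * x j)
    obtain ⟨⟨c₂, J₂⟩, hm₂, he₂⟩ :=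
      Finset.exists_mem_eq_inf' (f i₂).ne (fun p => p.1 + ∑ j, (p.2 j : ℝ) * x j)
    have hy : y.eval x = (a : ℝ) + ∑ j, (I j : ℝ) * x j := hx.symm
    have hQmem : ((i₁, c₁, J₁), (i₂, c₂, J₂)) ∈ Q := by
      rw [hQ, Finset.mem_filter, Finset.mem_product]
      exact ⟨⟨hMmem i₁ c₁ J₁ hm₁, hMmem i₂ c₂ J₂ hm₂⟩, hne⟩
    refine Set.mem_biUnion hQmem ?_
    have hv₁ : cellVal i₁ c₁ J₁ a I x = termVal f x (y.eval x) i₁ := by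
      rw [termVal, cellVal, hy, TropPoly.eval, he₁]
    have hv₂ : cellVal i₂ c₂ J₂ a I x = termVal f x (y.eval x) i₂ := by
      rw [termVal, cellVal, hy, TropPoly.eval, he₂]
    show cellVal i₁ c₁ J₁ a I x = cellVal i₂ c₂ J₂ a I x
    rw [hv₁, hv₂, heq]
  have hclosed : ∀ p, IsClosed (C p) := by
    intro p
    apply isClosed_eq
    · unfold cellVal
      fun_prop
    · unfold cellVal
      fun_prop
  have hexists : ∃ p ∈ Q, (interior (C p)).Nonempty := by
    by_contra hcon
    push_neg at hcon
    have hempty : interior (⋃ p ∈ Q, C p) = ∅ :=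
      finUnion_interior_empty Q C (fun p _ => hclosed p)
        (fun p hp => hcon p hp)
    obtain ⟨x, hx⟩ := hfull
    have : x ∈ interior (⋃ p ∈ Q, C p) := interior_mono hcover hx
    rw [hempty] at this
    exact this
  obtain ⟨⟨⟨i₁, c₁, J₁⟩, ⟨i₂, c₂, J₂⟩⟩, hpQ, hpint⟩ := hexists
  rw [hQ, Finset.mem_filter, Finset.mem_product] at hpQ
  obtain ⟨⟨hp₁, hp₂⟩, hne⟩ := hpQ
  have hget : ∀ (i : Fin (d+1)) (c : ℝ) (J : Fin n → ℕ), (i, c, J) ∈ M →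
      (c, J) ∈ (f i).monos := by
    intro i c J h
    rw [hM, Finset.mem_biUnion] at h
    obtain ⟨i', -, h⟩ := h
    rw [Finset.mem_image] at h
    obtain ⟨m, hm, hmeq⟩ := h
    obtain ⟨rfl, h2⟩ := Prod.mk.injEq .. ▸ hmeq
    rwa [← h2]
  have hm₁ : (c₁, J₁) ∈ (f i₁).monos := hget _ _ _ hp₁
  have hm₂ : (c₂, J₂) ∈ (f i₂).monos := hget _ _ _ hp₂
  have hsetrw : C ((i₁, c₁, J₁), (i₂, c₂, J₂)) =
      {x : Fin n → ℝ | (c₁ + (i₁ : ℕ) * (a : ℝ)) + ∑ j, ((J₁ j : ℝ) + (i₁ : ℕ) * (I j : ℝ)) * x j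
        = (c₂ + (i₂ : ℕ) * (a : ℝ)) + ∑ j, ((J₂ j : ℝ) + (i₂ : ℕ) * (I j : ℝ)) * x j} := by
    ext x
    simp only [hC, Set.mem_setOf_eq, cellVal_eq]
  rw [hsetrw] at hpint
  obtain ⟨hb, hw⟩ := affine_eq_of_interior _ _ _ _ hpint
  rcases hne.lt_or_gt with hlt | hlt
  · exact conclude_aux hlt hm₁ hm₂ hb hw
  · exact conclude_aux hlt hm₂ hm₁ hb.symm (fun j => (hw j).symm)
end

section
/- Call a finite nonempty set S ⊆ ℝ × ℚ^n of tropical monomials reduced if for every (a, I) ∈ S the function x ↦ min_{(b, J) ∈ S \ {(a,I)}} (b + ⟨J, x⟩) differs from x ↦ min_{(b, J) ∈ S} (b + ⟨J, x⟩) on ℝ^n (i.e. no monomial can be deleted without changing the function). If S and S' are reduced finite sets of tropical monomials that define the same function ℝ^n → ℝ, then S = S'. In particular, a tropical Newton–Puiseux polynomial function has a unique reduced representation. -/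
open Finset

/-- The function defined by a finite nonempty set `S ⊆ ℝ × ℚ^n` of tropical monomials. -/
noncomputable def monoSetEval {n : ℕ} (S : Finset (ℝ × (Fin n → ℚ))) (hS : S.Nonempty)
    (x : Fin n → ℝ) : ℝ :=
  S.inf' hS fun p => p.1 + ∑ j, (p.2 j : ℝ) * x j

/-- A finite set of tropical monomials is reduced if no monomial can be deleted without
changing the function, i.e. every monomial is strictly below all the others at some point
(for a singleton this holds vacuously: deleting the only monomial changes the function). -/
def ReducedMonoSet {n : ℕ} (S : Finset (ℝ × (Fin n → ℚ))) : Prop :=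
  ∀ p ∈ S, ∃ x : Fin n → ℝ, ∀ q ∈ S.erase p,
    p.1 + ∑ j, (p.2 j : ℝ) * x j < q.1 + ∑ j, (q.2 j : ℝ) * x j

open MeasureTheory


/-- A nonzero hyperplane has measure zero. -/
lemma hyperplane_null {n : ℕ} (w : Fin n → ℝ) (hw : w ≠ 0) (c : ℝ) :
    volume {z : Fin n → ℝ | ∑ j, w j * z j = c} = 0 := by
  classical
  obtain ⟨j0, hj0⟩ : ∃ j, w j ≠ 0 := by
    by_contra h; push_neg at h; exact hw (funext h)
  set φ : (Fin n → ℝ) →ₗ[ℝ] ℝ := ∑ j, w j • LinearMap.proj j with hφ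
  have hφapp : ∀ z, φ z = ∑ j, w j * z j := by
    intro z; simp [hφ, LinearMap.sum_apply]
  have hφne : φ ≠ 0 := by
    intro h
    have := hφapp (Pi.single j0 1)
    rw [h] at this
    simp [Pi.single_apply, Finset.sum_ite_eq'] at this
    exact hj0 this.symm
  set z0 : Fin n → ℝ := Pi.single j0 (c / w j0) with hz0
  have hz0v : φ z0 = c := by
    rw [hφapp]
    simp [hz0, Pi.single_apply, mul_ite, Finset.sum_ite_eq']
    field_simp
  have hset : {z : Fin n → ℝ | ∑ j, w j * z j = c}
      = (fun z => z + (-z0)) ⁻¹' (LinearMap.ker φ : Set (Fin n → ℝ)) := by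
    ext z
    simp only [Set.mem_setOf_eq, Set.mem_preimage, SetLike.mem_coe, LinearMap.mem_ker,
      map_add, map_neg, hz0v, ← hφapp]
    constructor
    · intro h; rw [h]; ring
    · intro h; linarith
  rw [hset, measure_preimage_add_right]
  exact Measure.addHaar_submodule _ _ (by
    rw [Ne, LinearMap.ker_eq_top]; exact hφne)

lemma subset_of_eval_eq {n : ℕ} (S S' : Finset (ℝ × (Fin n → ℚ)))
    (hS : S.Nonempty) (hS' : S'.Nonempty) (hred : ReducedMonoSet S)
    (heq : ∀ x, monoSetEval S hS x = monoSetEval S' hS' x) : S ⊆ S' := by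
  classical
  intro p hp
  obtain ⟨x, hx⟩ := hred p hp
  -- strict inequalities persist near x
  have hev : ∀ᶠ z in nhds x, ∀ q ∈ S.erase p,
      p.1 + ∑ j, (p.2 j : ℝ) * z j < q.1 + ∑ j, (q.2 j : ℝ) * z j := by
    rw [Filter.eventually_all_finset]
    intro q hq
    have hc : ∀ (r : ℝ × (Fin n → ℚ)),
        Continuous fun z : Fin n → ℝ => r.1 + ∑ j, (r.2 j : ℝ) * z j := by
      intro r; fun_prop
    exact ((hc p).continuousAt).eventually_lt ((hc q).continuousAt) (hx q hq)
  obtain ⟨ε, hε, hball⟩ := Metric.eventually_nhds_iff_ball.mp hev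
  -- the bad set (union of hyperplanes) has measure zero
  set T := S'.filter (fun q => q.2 ≠ p.2) with hT
  set Bad : Set (Fin n → ℝ) :=
    ⋃ q ∈ (T : Set (ℝ × (Fin n → ℚ))),
      {z | ∑ j, ((q.2 j : ℝ) - (p.2 j : ℝ)) * z j = p.1 - q.1} with hBad
  have hBadnull : volume Bad = 0 := by
    rw [hBad, measure_biUnion_null_iff (T.countable_toSet)]
    intro q hq
    simp only [Finset.coe_filter, Set.mem_setOf_eq, hT] at hq
    apply hyperplane_null
    intro h
    apply hq.2
    funext j
    have := congrFun h j
    simp at this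
    exact_mod_cast sub_eq_zero.mp (by exact_mod_cast this)
  -- find a good point
  have hpos : volume (Metric.ball x ε \ Bad) ≠ 0 := by
    intro h
    have h2 : volume (Metric.ball x ε) = 0 := by
      have hsub : Metric.ball x ε ⊆ (Metric.ball x ε \ Bad) ∪ Bad := by
        intro z hz
        by_cases hzb : z ∈ Bad
        · exact Or.inr hzb
        · exact Or.inl ⟨hz, hzb⟩
      exact measure_mono_null hsub (measure_union_null h hBadnull)
    exact (Metric.measure_ball_pos volume x hε).ne' h2
  obtain ⟨z, hzball, hzbad⟩ := nonempty_of_measure_ne_zero hpos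
  -- at z, the S-min equals p's value
  have hSz : monoSetEval S hS z = p.1 + ∑ j, (p.2 j : ℝ) * z j := by
    apply le_antisymm (Finset.inf'_le _ hp)
    apply Finset.le_inf'
    intro q hq
    by_cases hqp : q = p
    · rw [hqp]
    · exact le_of_lt (hball z hzball q (Finset.mem_erase.mpr ⟨hqp, hq⟩))
  -- the S'-min is attained at some q
  obtain ⟨q, hqS', hqv⟩ := Finset.exists_mem_eq_inf' hS'
      (fun r : ℝ × (Fin n → ℚ) => r.1 + ∑ j, (r.2 j : ℝ) * z j)
  have hqz : q.1 + ∑ j, (q.2 j : ℝ) * z j = p.1 + ∑ j, (p.2 j : ℝ) * z j := by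
    rw [← hqv]; rw [← hSz, heq z]; rfl
  -- q must equal p
  have hq2 : q.2 = p.2 := by
    by_contra hne
    apply hzbad
    rw [hBad]
    refine Set.mem_biUnion (show q ∈ (T : Set _) by
      simp [hT, hqS', hne]) ?_
    simp only [Set.mem_setOf_eq, sub_mul, Finset.sum_sub_distrib]
    linarith
  have hq1 : q.1 = p.1 := by
    rw [hq2] at hqz; linarith
  have : q = p := Prod.ext hq1 hq2
  rwa [← this]


/-- Two reduced finite sets of tropical monomials defining the same function coincide:
a tropical Newton-Puiseux polynomial function has a unique reduced representation. -/
theorem reduced_representation_unique {n : ℕ} (S S' : Finset (ℝ × (Fin n → ℚ)))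
    (hS : S.Nonempty) (hS' : S'.Nonempty) (hred : ReducedMonoSet S)
    (hred' : ReducedMonoSet S')
    (heq : ∀ x, monoSetEval S hS x = monoSetEval S' hS' x) :
    S = S' :=
  Finset.Subset.antisymm (subset_of_eval_eq S S' hS hS' hred heq)
    (subset_of_eval_eq S' S hS' hS hred' (fun x => (heq x).symm))
end

section
/- Let f_0, …, f_d be tropical polynomials in n variables with rational coefficients, f_i = ⊕_J c_{i,J} ⊗ x^{⊗J}, let y = ⊕_{I ∈ S} a_I ⊗ x^{⊗I} be a tropical Newton–Puiseux polynomial, and let m be a positive integer. Then y is a resolution of f = ⊕_{i=0}^d f_i ⊗ y^{⊗i} if and only if the tropical Newton–Puiseux polynomial y_m = ⊕_{I ∈ S} (m·a_I) ⊗ x^{⊗I} is a resolution of f^{(m)} = ⊕_{i=0}^d f_i^{(m)} ⊗ y^{⊗i}, where f_i^{(m)} = ⊕_J (m·c_{i,J}) ⊗ x^{⊗J}. In particular, by taking m a common denominator of all the coefficients of f_0, …, f_d, the question of resolubility reduces to the case of integer coefficients. -/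
open Finset

/-- The tropical polynomial obtained by multiplying all the coefficients by `m`. -/
noncomputable def TropPoly.scale {n : ℕ} (f : TropPoly n) (m : ℕ) : TropPoly n :=
  ⟨f.monos.image fun p => ((m : ℝ) * p.1, p.2), f.ne.image _⟩

/-- The Newton-Puiseux polynomial obtained by multiplying all the coefficients by `m`. -/
def NPPoly.scale {n : ℕ} (y : NPPoly n) (m : ℕ) : NPPoly n :=
  ⟨y.monos.image fun p => ((m : ℚ) * p.1, p.2), y.ne.image _⟩

/-- A tropical polynomial has rational coefficients. -/
def HasRatCoeffs {n : ℕ} (f : TropPoly n) : Prop :=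
  ∀ p ∈ f.monos, ∃ q : ℚ, p.1 = (q : ℝ)

/-!
Multiplying every coefficient of a tropical (Newton–Puiseux) polynomial by `m > 0` and
evaluating at `m • x` multiplies its value at `x` by `m`, since the exponents are untouched.
Hence all the terms `f_i(x) + i·y(x)` of the scaled problem at `m • x` are `m` times those of
the original problem at `x`; multiplication by `m` is strictly increasing, so it preserves
where the minimum is attained, and `x ↦ m • x` is a bijection of `ℝ^n`.
-/

theorem TropPoly.eval_scale {n : ℕ} (f : TropPoly n) (m : ℕ) (x : Fin n → ℝ) :
    (f.scale m).eval ((m : ℝ) • x) = m * f.eval x := by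
  unfold TropPoly.scale TropPoly.eval
  rw [← nsmul_eq_mul, nsmul_inf', inf'_image]
  refine inf'_congr _ rfl fun p _ => ?_
  simp only [Function.comp_apply, Pi.smul_apply, smul_eq_mul, nsmul_eq_mul, mul_add, mul_sum]
  ring_nf

theorem NPPoly.eval_scale {n : ℕ} (y : NPPoly n) (m : ℕ) (x : Fin n → ℝ) :
    (y.scale m).eval ((m : ℝ) • x) = m * y.eval x := by
  unfold NPPoly.scale NPPoly.eval
  rw [← nsmul_eq_mul, nsmul_inf', inf'_image]
  refine inf'_congr _ rfl fun p _ => ?_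
  simp only [Function.comp_apply, Pi.smul_apply, smul_eq_mul, nsmul_eq_mul, mul_add, mul_sum]
  push_cast
  ring_nf

theorem tiesAt_iff_of_termVal_eq {n n' d : ℕ} {f : Fin (d+1) → TropPoly n}
    {g : Fin (d+1) → TropPoly n'} {x : Fin n → ℝ} {x' : Fin n' → ℝ} {y₀ y₀' : ℝ} {φ : ℝ → ℝ}
    (hφ : StrictMono φ) (h : ∀ i, termVal g x' y₀' i = φ (termVal f x y₀ i)) :
    TiesAt g x' y₀' ↔ TiesAt f x y₀ := by
  simp only [TiesAt, h, hφ.injective.eq_iff, hφ.le_iff_le]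

theorem tiesAt_scale {n d : ℕ} (f : Fin (d+1) → TropPoly n) {m : ℕ} (hm : 0 < m)
    (x : Fin n → ℝ) (y₀ : ℝ) :
    TiesAt (fun i => (f i).scale m) ((m : ℝ) • x) (m * y₀) ↔ TiesAt f x y₀ :=
  tiesAt_iff_of_termVal_eq (strictMono_mul_left_of_pos (Nat.cast_pos.mpr hm)) fun i => by
    simp only [termVal, TropPoly.eval_scale]
    ring

theorem resolution_iff_scaled_general {n d : ℕ} (f : Fin (d+1) → TropPoly n)
    (y : NPPoly n) (m : ℕ) (hm : 0 < m) :
    IsResolution f y.eval ↔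
      IsResolution (fun i => (f i).scale m) (y.scale m).eval := by
  have hm' : (m : ℝ) ≠ 0 := Nat.cast_ne_zero.mpr hm.ne'
  refine Iff.symm <| (MulAction.surjective₀ hm').forall.trans <| forall_congr' fun x => ?_
  rw [NPPoly.eval_scale, tiesAt_scale f hm]

/-- Let `f_0, ..., f_d` be tropical polynomials with rational coefficients, `y` a tropical
Newton-Puiseux polynomial, and `m` a positive integer.  Then `y` is a resolution of
`f = ⊕ f_i ⊗ y^{⊗i}` iff `y_m` (with all coefficients multiplied by `m`) is a resolution of
`f^{(m)} = ⊕ f_i^{(m)} ⊗ y^{⊗i}` (with all coefficients multiplied by `m`): resolubility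
reduces to the case of integer coefficients. -/
theorem resolution_iff_scaled {n d : ℕ} (f : Fin (d+1) → TropPoly n)
    (hq : ∀ i, HasRatCoeffs (f i)) (y : NPPoly n) (m : ℕ) (hm : 0 < m) :
    IsResolution f y.eval ↔
      IsResolution (fun i => (f i).scale m) (y.scale m).eval :=
  resolution_iff_scaled_general f y m hm
end
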